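/- arXiv:1806.00032 — 2 statements merged into one kernel-verified Lean document; each statement's English description precedes it below -/
import Mathlib

section
/- For all real numbers a₁, a₂, all natural numbers n₁, n₂, and every real number x, the nearest-neighbor recurrence x · C_{n₁,n₂}^{(a₁,a₂)}(x) = C_{n₁+1,n₂}^{(a₁,a₂)}(x) + (a₁ + n₁ + n₂) · C_{n₁,n₂}^{(a₁,a₂)}(x) + a₁n₁ · C_{n₁-1,n₂}^{(a₁,a₂)}(x) + a₂n₂ · C_{n₁,n₂-1}^{(a₁,a₂)}(x) holds, where a term whose index would be negative is zero (its coefficient n_i vanishes). -/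
/-!
Write `Tₐⁿ g = ∑ₖ (n choose k) (-a)ⁿ⁻ᵏ g k`, which is `((E - a)ⁿ g) 0` for the shift
`E g k = g (k + 1)`; then `C_{n₁,n₂}(x) = T_{a₁}^{n₁} T_{a₂}^{n₂} x^{(k+l)}`.
Two identities of `T` drive the recurrence: Pascal's rule `Tₐⁿ⁺¹ g = Tₐⁿ (E g) - a Tₐⁿ g`, and
`Tₐⁿ (k g k) = n Tₐⁿ g + a n Tₐⁿ⁻¹ g`, which comes from `k (n choose k) = n (n-1 choose k-1)`.
Multiplying `x^{(m)}` by `x` gives `x^{(m+1)} + m x^{(m)}`; splitting `m = k + l` and applying the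
two identities in `k` and in `l` yields the four terms of the recurrence.
-/

/-- The falling factorial `x⁽ⁿ⁾ = x(x-1)⋯(x-n+1)`. -/
noncomputable def fallingFactorial (x : ℝ) (n : ℕ) : ℝ :=
  ∏ j ∈ Finset.range n, (x - j)

/-- The multiple Charlier polynomial `C_{n₁,n₂}^{(a₁,a₂)}(x)`. -/
noncomputable def charlier (a₁ a₂ : ℝ) (n₁ n₂ : ℕ) (x : ℝ) : ℝ :=
  ∑ k ∈ Finset.range (n₁ + 1), ∑ l ∈ Finset.range (n₂ + 1),
    (n₁.choose k : ℝ) * (n₂.choose l : ℝ) * (-a₁) ^ (n₁ - k) * (-a₂) ^ (n₂ - l) *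
      fallingFactorial x (k + l)

open Finset

noncomputable def binomialTransform {R : Type*} [CommRing R] (a : R) (n : ℕ) (g : ℕ → R) : R :=
  ∑ k ∈ range (n + 1), (n.choose k : R) * (-a) ^ (n - k) * g k

section

variable {R : Type*} [CommRing R] (a : R) (n : ℕ)

theorem binomialTransform_add (g h : ℕ → R) :
    binomialTransform a n (fun k => g k + h k) =
      binomialTransform a n g + binomialTransform a n h := by
  simp only [binomialTransform, mul_add, sum_add_distrib]

theorem binomialTransform_const_mul (c : R) (g : ℕ → R) :
    binomialTransform a n (fun k => c * g k) = c * binomialTransform a n g := by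
  simp only [binomialTransform, mul_sum]
  exact sum_congr rfl fun _ _ => by ring

theorem binomialTransform_succ (g : ℕ → R) :
    binomialTransform a (n + 1) g =
      binomialTransform a n (fun k => g (k + 1)) - a * binomialTransform a n g := by
  have pascal := sum_choose_succ_mul (fun i j => (-a) ^ j * g i) n
  have top_power : ∀ k ∈ range (n + 1),
      (n.choose k : R) * ((-a) ^ (n + 1 - k) * g k) =
        -a * ((n.choose k : R) * (-a) ^ (n - k) * g k) := by
    intro k hk
    rw [Nat.sub_add_comm (Nat.lt_succ_iff.mp (mem_range.mp hk)), pow_succ]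
    ring
  simp only [sum_congr rfl top_power, ← mul_sum] at pascal
  simp only [binomialTransform, ← mul_assoc] at pascal ⊢
  linear_combination pascal

theorem binomialTransform_succ_natCast_mul (g : ℕ → R) :
    binomialTransform a (n + 1) (fun k => k * g k) =
      (n + 1) * binomialTransform a n (fun k => g (k + 1)) := by
  rw [binomialTransform, sum_range_succ', binomialTransform, mul_sum]
  simp only [Nat.cast_zero, zero_mul, mul_zero, add_zero, Nat.add_sub_add_right]
  refine sum_congr rfl fun k _ => ?_
  have absorption := congrArg (Nat.cast : ℕ → R) (Nat.add_one_mul_choose_eq n k)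
  push_cast at absorption ⊢
  linear_combination (-((-a) ^ (n - k) * g (k + 1))) * absorption

theorem binomialTransform_natCast_mul (g : ℕ → R) :
    binomialTransform a n (fun k => k * g k) =
      n * binomialTransform a n g + a * n * binomialTransform a (n - 1) g := by
  cases n with
  | zero => simp [binomialTransform]
  | succ n =>
    rw [binomialTransform_succ_natCast_mul, binomialTransform_succ, Nat.add_sub_cancel]
    push_cast
    ring

noncomputable def binomialTransform₂ (a₁ a₂ : R) (n₁ n₂ : ℕ) (f : ℕ → R) : R :=
  binomialTransform a₁ n₁ fun k => binomialTransform a₂ n₂ fun l => f (k + l)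

theorem binomialTransform₂_recurrence (a₁ a₂ x : R) (f : ℕ → R)
    (hf : ∀ m, x * f m = f (m + 1) + m * f m) (n₁ n₂ : ℕ) :
    x * binomialTransform₂ a₁ a₂ n₁ n₂ f =
      binomialTransform₂ a₁ a₂ (n₁ + 1) n₂ f
        + (a₁ + n₁ + n₂) * binomialTransform₂ a₁ a₂ n₁ n₂ f
        + a₁ * n₁ * binomialTransform₂ a₁ a₂ (n₁ - 1) n₂ f
        + a₂ * n₂ * binomialTransform₂ a₁ a₂ n₁ (n₂ - 1) f := by
  have weight_l : ∀ k, binomialTransform a₂ n₂ (fun l => l * f (k + l)) =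
      n₂ * binomialTransform a₂ n₂ (fun l => f (k + l))
        + a₂ * n₂ * binomialTransform a₂ (n₂ - 1) (fun l => f (k + l)) :=
    fun k => binomialTransform_natCast_mul a₂ n₂ fun l => f (k + l)
  have shift_k := binomialTransform_succ a₁ n₁ fun k => binomialTransform a₂ n₂ fun l => f (k + l)
  have weight_k :=
    binomialTransform_natCast_mul a₁ n₁ fun k => binomialTransform a₂ n₂ fun l => f (k + l)
  simp only [Nat.add_right_comm _ 1] at shift_k
  calc x * binomialTransform₂ a₁ a₂ n₁ n₂ f
      = binomialTransform a₁ n₁ fun k => binomialTransform a₂ n₂ fun l => x * f (k + l) := by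
        simp only [binomialTransform₂, binomialTransform_const_mul]
    _ = (binomialTransform a₁ n₁ fun k => binomialTransform a₂ n₂ fun l => f (k + l + 1))
          + (binomialTransform a₁ n₁ fun k => k * binomialTransform a₂ n₂ fun l => f (k + l))
          + binomialTransform a₁ n₁ fun k => binomialTransform a₂ n₂ fun l => l * f (k + l) := by
        simp only [hf, binomialTransform_add, binomialTransform_const_mul, Nat.cast_add, add_mul,
          add_assoc]
    _ = _ := by
        simp only [weight_l, binomialTransform_add, binomialTransform_const_mul, binomialTransform₂]
        linear_combination weight_k - shift_k

end

theorem mul_fallingFactorial (x : ℝ) (m : ℕ) :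
    x * fallingFactorial x m = fallingFactorial x (m + 1) + m * fallingFactorial x m := by
  rw [fallingFactorial, fallingFactorial, prod_range_succ]
  ring

theorem charlier_eq_binomialTransform₂ (a₁ a₂ : ℝ) (n₁ n₂ : ℕ) (x : ℝ) :
    charlier a₁ a₂ n₁ n₂ x = binomialTransform₂ a₁ a₂ n₁ n₂ (fallingFactorial x) := by
  simp only [charlier, binomialTransform₂, binomialTransform, mul_sum]
  exact sum_congr rfl fun _ _ => sum_congr rfl fun _ _ => by ring

/-- The nearest-neighbor recurrence `x C_{n₁,n₂} = C_{n₁+1,n₂} + (a₁+n₁+n₂) C_{n₁,n₂}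
  + a₁n₁ C_{n₁-1,n₂} + a₂n₂ C_{n₁,n₂-1}`; a term whose index would be negative is zero
  since its coefficient `nᵢ` vanishes. -/
theorem charlier_nearest_neighbor_recurrence (a₁ a₂ : ℝ) (n₁ n₂ : ℕ) (x : ℝ) :
    x * charlier a₁ a₂ n₁ n₂ x =
      charlier a₁ a₂ (n₁ + 1) n₂ x
        + (a₁ + n₁ + n₂) * charlier a₁ a₂ n₁ n₂ x
        + a₁ * n₁ * charlier a₁ a₂ (n₁ - 1) n₂ x
        + a₂ * n₂ * charlier a₁ a₂ n₁ (n₂ - 1) x := by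
  simp only [charlier_eq_binomialTransform₂]
  exact binomialTransform₂_recurrence a₁ a₂ x _ (mul_fallingFactorial x) n₁ n₂
end

section
/- Let r ≥ 1, let ω ≠ 0 be real, and let {P_n}_{n∈ℕ^r} be real polynomials indexed by multi-indices with deg P_n = |n| = n₁ + ⋯ + n_r. Then Δ_ω P_n = Σ_{j=1}^{r} n_j P_{n-e_j} holds for all n (where e_j is the j-th unit multi-index and terms with a negative index are omitted) if and only if there exists a family of real numbers {a_m}_{m∈ℕ^r} with a_0 ≠ 0 such that P_n(x) = Σ_{k₁=0}^{n₁} ⋯ Σ_{k_r=0}^{n_r} (∏_{i=1}^{r} C(n_i,k_i)) a_{n-k} x^{(k₁+⋯+k_r,ω)} for all n and all real x. -/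
/-!
`Δ_ω` lowers generalized falling factorials as `d/dx` lowers powers:
`Δ_ω x^{(m,ω)} = m x^{(m-1,ω)}`. Together with the absorption identity
`k_j C(n,k) = n_j C(n - e_j, k - e_j)` this shows that the representation is multiple
`Δ_ω`-Appell for every `a`. Conversely, the kernel of `Δ_ω` consists of the constants (an
`ω`-periodic polynomial is constant), so an Appell family is determined by its values at `0`, and
induction on `n` identifies `P_n` with the representation for `a_m = P_m(0)`. Finally `a_0 = 0`
would give `P_0 = 0`, hence `Δ_ω P_{e_j} = 0`, forcing `P_{e_j}` to be constant, against
`deg P_{e_j} = 1`.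
-/

open Polynomial

/-- The generalized falling factorial `x^{(n,ω)} = ∏_{j=0}^{n-1} (x - jω)`. -/
noncomputable def genFallingFactorial (ω x : ℝ) (n : ℕ) : ℝ :=
  ∏ j ∈ Finset.range n, (x - j * ω)

/-- The difference operator `Δ_ω` acting on real polynomials:
`(Δ_ω f)(x) = (f(x+ω) - f(x))/ω`. -/
noncomputable def deltaOmega (ω : ℝ) (p : Polynomial ℝ) : Polynomial ℝ :=
  Polynomial.C ω⁻¹ * (p.comp (Polynomial.X + Polynomial.C ω) - p)

namespace Polynomial

variable {R : Type*} [CommRing R] [IsDomain R] [CharZero R]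

theorem eq_C_eval_zero_of_comp_X_add_C_eq {p : R[X]} {ω : R} (hω : ω ≠ 0)
    (hp : p.comp (X + C ω) = p) : p = C (p.eval 0) := by
  have hshift (x : R) : p.eval (x + ω) = p.eval x := by
    conv_rhs => rw [← hp]
    simp [eval_comp]
  have hmul (k : ℕ) : p.eval (k * ω) = p.eval 0 := by
    induction k with
    | zero => simp
    | succ k ih => rw [Nat.cast_succ, add_one_mul, hshift, ih]
  rw [← sub_eq_zero]
  refine eq_zero_of_infinite_isRoot _ (Set.infinite_of_injective_forall_mem
    (f := fun k : ℕ => (k : R) * ω) (fun a b hab => ?_) fun k => by simp [hmul k])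
  exact_mod_cast mul_right_cancel₀ hω hab

end Polynomial

noncomputable def fallingFactorialPoly (ω : ℝ) (m : ℕ) : ℝ[X] :=
  ∏ j ∈ Finset.range m, (X - C (j * ω))

theorem eval_fallingFactorialPoly (ω x : ℝ) (m : ℕ) :
    (fallingFactorialPoly ω m).eval x = genFallingFactorial ω x m := by
  simp [fallingFactorialPoly, genFallingFactorial, eval_prod]

theorem eval_zero_fallingFactorialPoly (ω : ℝ) {m : ℕ} (hm : m ≠ 0) :
    (fallingFactorialPoly ω m).eval 0 = 0 := by
  rw [fallingFactorialPoly, eval_prod]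
  exact Finset.prod_eq_zero (Finset.mem_range.mpr (Nat.pos_of_ne_zero hm)) (by simp)

theorem fallingFactorialPoly_succ_comp_X_add_C (ω : ℝ) (m : ℕ) :
    (fallingFactorialPoly ω (m + 1)).comp (X + C ω) = (X + C ω) * fallingFactorialPoly ω m := by
  simp only [fallingFactorialPoly, prod_comp, sub_comp, X_comp, C_comp]
  rw [Finset.prod_range_succ', mul_comm]
  congr 1
  · simp
  · refine Finset.prod_congr rfl fun j _ => ?_
    simp only [Nat.cast_succ, add_mul, one_mul, C_add]
    ring

theorem deltaOmega_fallingFactorialPoly {ω : ℝ} (hω : ω ≠ 0) (m : ℕ) :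
    deltaOmega ω (fallingFactorialPoly ω m) = C (m : ℝ) * fallingFactorialPoly ω (m - 1) := by
  cases m with
  | zero => simp [deltaOmega, fallingFactorialPoly]
  | succ m =>
    have hsucc : fallingFactorialPoly ω (m + 1) = fallingFactorialPoly ω m * (X - C (m * ω)) :=
      Finset.prod_range_succ _ _
    rw [deltaOmega, fallingFactorialPoly_succ_comp_X_add_C, hsucc, Nat.add_sub_cancel]
    have hcoeff : ω⁻¹ * (ω + m * ω) = (m + 1 : ℕ) := by field_simp; push_cast; ring
    rw [← hcoeff]
    simp only [C_mul, C_add]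
    ring

theorem deltaOmega_sub (ω : ℝ) (p q : ℝ[X]) :
    deltaOmega ω (p - q) = deltaOmega ω p - deltaOmega ω q := by
  simp only [deltaOmega, sub_comp]
  ring

theorem deltaOmega_sum {ι : Type*} (ω : ℝ) (s : Finset ι) (f : ι → ℝ[X]) :
    deltaOmega ω (∑ i ∈ s, f i) = ∑ i ∈ s, deltaOmega ω (f i) := by
  simp only [deltaOmega, sum_comp, ← Finset.sum_sub_distrib, Finset.mul_sum]

theorem deltaOmega_C_mul (ω c : ℝ) (p : ℝ[X]) :
    deltaOmega ω (C c * p) = C c * deltaOmega ω p := by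
  simp only [deltaOmega, mul_comp, C_comp]
  ring

theorem eq_C_of_deltaOmega_eq_zero {ω : ℝ} (hω : ω ≠ 0) {p : ℝ[X]} (hp : deltaOmega ω p = 0) :
    p = C (p.eval 0) := by
  rw [deltaOmega, mul_eq_zero, C_eq_zero, sub_eq_zero] at hp
  exact eq_C_eval_zero_of_comp_X_add_C_eq hω (hp.resolve_left (inv_ne_zero hω))

section MultiIndex

variable {ι : Type*} [DecidableEq ι]

theorem update_sub_one_add_single {n : ι → ℕ} {j : ι} (hj : n j ≠ 0) :
    Function.update n j (n j - 1) + Pi.single j 1 = n := by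
  ext i
  rcases eq_or_ne i j with rfl | hij
  · simp; omega
  · simp [hij]

variable [Fintype ι]

theorem sum_apply_add_single (k : ι → ℕ) (j : ι) :
    ∑ i, (k + Pi.single j 1 : ι → ℕ) i = ∑ i, k i + 1 := by
  simp [Finset.sum_add_distrib]

theorem apply_mul_prod_choose_add_single (m k : ι → ℕ) (j : ι) :
    (k + Pi.single j 1 : ι → ℕ) j *
        ∏ i, ((m + Pi.single j 1 : ι → ℕ) i).choose ((k + Pi.single j 1 : ι → ℕ) i) =
      (m j + 1) * ∏ i, (m i).choose (k i) := by
  rw [Fintype.prod_eq_mul_prod_compl j, Fintype.prod_eq_mul_prod_compl j,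
    Finset.prod_congr rfl fun i hi => by rw [Pi.add_apply, Pi.add_apply,
      Pi.single_eq_of_ne (Finset.mem_compl.mp hi ∘ Finset.mem_singleton.mpr), add_zero, add_zero]]
  simp only [Pi.add_apply, Pi.single_eq_same, ← mul_assoc, Nat.add_one_mul_choose_eq]
  ring

theorem sum_Iic_add_single {M : Type*} [AddCommMonoid M] (m : ι → ℕ) (j : ι)
    (f : (ι → ℕ) → M) (hf : ∀ k, k j = 0 → f k = 0) :
    ∑ k ∈ Finset.Iic (m + Pi.single j 1), f k = ∑ k ∈ Finset.Iic m, f (k + Pi.single j 1) := by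
  refine Eq.trans ?_ (Finset.sum_map _ (addRightEmbedding (Pi.single j 1)) f)
  refine (Finset.sum_subset (fun k hk => ?_) fun k hk hk' => hf k ?_).symm
  · obtain ⟨k, hkm, rfl⟩ := Finset.mem_map.mp hk
    exact Finset.mem_Iic.mpr (add_le_add (Finset.mem_Iic.mp hkm) le_rfl)
  · by_contra hkj
    refine hk' (Finset.mem_map.mpr ⟨k - Pi.single j 1, Finset.mem_Iic.mpr fun i => ?_, ?_⟩)
    · have := Finset.mem_Iic.mp hk i
      rcases eq_or_ne i j with rfl | hij <;> simp_all
    · ext i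
      rcases eq_or_ne i j with rfl | hij
      · simp; omega
      · simp [hij]

end MultiIndex

section Appell

variable {ι : Type*} [Fintype ι]

theorem deltaOmega_C_mul_fallingFactorialPoly_sum {ω : ℝ} (hω : ω ≠ 0) (c : ℝ) (k : ι → ℕ) :
    deltaOmega ω (C c * fallingFactorialPoly ω (∑ i, k i)) =
      ∑ j, C (k j * c) * fallingFactorialPoly ω (∑ i, k i - 1) := by
  simp only [deltaOmega_C_mul, deltaOmega_fallingFactorialPoly hω, Nat.cast_sum, map_sum,
    Finset.mul_sum, Finset.sum_mul, C_mul]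
  exact Finset.sum_congr rfl fun j _ => by ring

variable [DecidableEq ι]

noncomputable def appellRep (ω : ℝ) (a : (ι → ℕ) → ℝ) (n : ι → ℕ) : ℝ[X] :=
  ∑ k ∈ Finset.Iic n,
    C ((∏ i, ((n i).choose (k i) : ℝ)) * a (n - k)) * fallingFactorialPoly ω (∑ i, k i)

/-- For `n j = 0` the index `n j - 1` truncates to `0`; that term is harmless since its
coefficient is `n j = 0`. -/
def IsMultipleDeltaAppell (ω : ℝ) (P : (ι → ℕ) → ℝ[X]) : Prop :=
  ∀ n, deltaOmega ω (P n) = ∑ j, C (n j : ℝ) * P (Function.update n j (n j - 1))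

theorem eval_appellRep (ω : ℝ) (a : (ι → ℕ) → ℝ) (n : ι → ℕ) (x : ℝ) :
    (appellRep ω a n).eval x =
      ∑ k ∈ Fintype.piFinset (fun i => Finset.range (n i + 1)),
        (∏ i, ((n i).choose (k i) : ℝ)) * a (fun i => n i - k i) *
          genFallingFactorial ω x (∑ i, k i) := by
  simp only [appellRep, eval_finsetSum, eval_mul, eval_C, eval_fallingFactorialPoly,
    Nat.range_succ_eq_Iic]
  rfl

theorem eval_zero_appellRep (ω : ℝ) (a : (ι → ℕ) → ℝ) (n : ι → ℕ) :
    (appellRep ω a n).eval 0 = a n := by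
  rw [appellRep, eval_finsetSum, Finset.sum_eq_single_of_mem 0 (by simp)]
  · simp [fallingFactorialPoly]
  · intro k _ hk
    have : ∑ i, k i ≠ 0 := fun h => hk (funext (Finset.sum_eq_zero_iff.mp h · (Finset.mem_univ _)))
    simp [eval_zero_fallingFactorialPoly ω this]

theorem sum_Iic_mul_appellRep_term {ω : ℝ} (a : (ι → ℕ) → ℝ) (n : ι → ℕ) (j : ι) :
    ∑ k ∈ Finset.Iic n, C (k j * ((∏ i, ((n i).choose (k i) : ℝ)) * a (n - k))) *
        fallingFactorialPoly ω (∑ i, k i - 1) =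
      C (n j : ℝ) * appellRep ω a (Function.update n j (n j - 1)) := by
  by_cases hj : n j = 0
  · refine (Finset.sum_eq_zero fun k hk => ?_).trans (by simp [hj])
    have : k j = 0 := Nat.eq_zero_of_le_zero (hj ▸ Finset.mem_Iic.mp hk j)
    simp [this]
  set m := Function.update n j (n j - 1)
  have hm : m + Pi.single j 1 = n := update_sub_one_add_single hj
  have hnj : (n j : ℝ) = m j + 1 := by rw [← hm]; simp
  conv_lhs => rw [← hm]
  rw [sum_Iic_add_single m j _ fun k hk => by simp [hk], appellRep, hnj, Finset.mul_sum]
  refine Finset.sum_congr rfl fun k _ => ?_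
  have hchoose : ((k + Pi.single j 1 : ι → ℕ) j : ℝ) *
      ∏ i, (((m + Pi.single j 1 : ι → ℕ) i).choose ((k + Pi.single j 1 : ι → ℕ) i) : ℝ) =
      (m j + 1) * ∏ i, ((m i).choose (k i) : ℝ) := by
    exact_mod_cast apply_mul_prod_choose_add_single m k j
  rw [sum_apply_add_single, Nat.add_sub_cancel, add_tsub_add_eq_tsub_right, ← mul_assoc,
    ← mul_assoc, hchoose]
  simp only [C_mul, mul_assoc]

theorem isMultipleDeltaAppell_appellRep {ω : ℝ} (hω : ω ≠ 0) (a : (ι → ℕ) → ℝ) :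
    IsMultipleDeltaAppell ω (appellRep ω a) := by
  intro n
  simp only [appellRep, deltaOmega_sum, deltaOmega_C_mul_fallingFactorialPoly_sum hω]
  rw [Finset.sum_comm]
  exact Finset.sum_congr rfl fun j _ => sum_Iic_mul_appellRep_term a n j

end Appell

namespace IsMultipleDeltaAppell

variable {ι : Type*} [Fintype ι] [DecidableEq ι] {ω : ℝ} {P : (ι → ℕ) → ℝ[X]}

theorem eq_appellRep (hω : ω ≠ 0) (hP : IsMultipleDeltaAppell ω P) (n : ι → ℕ) :
    P n = appellRep ω (fun m => (P m).eval 0) n := by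
  induction n using WellFoundedLT.induction with
  | ind n ih =>
    set Q := appellRep ω (fun m => (P m).eval 0)
    have hΔ : deltaOmega ω (P n - Q n) = 0 := by
      rw [deltaOmega_sub, hP n, isMultipleDeltaAppell_appellRep hω _ n, ← Finset.sum_sub_distrib]
      refine Finset.sum_eq_zero fun j _ => ?_
      by_cases hj : n j = 0
      · simp [hj]
      · rw [ih _ (update_lt_self_iff.mpr (by omega)), sub_self]
    have h0 : (P n - Q n).eval 0 = 0 := by simp [Q, eval_zero_appellRep]
    rw [← sub_eq_zero, eq_C_of_deltaOmega_eq_zero hω hΔ, h0, map_zero]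

theorem eval_zero_zero_ne_zero (hω : ω ≠ 0) (hP : IsMultipleDeltaAppell ω P) (j : ι)
    (h0 : (P 0).natDegree = 0) (h1 : (P (Pi.single j 1)).natDegree = 1) : (P 0).eval 0 ≠ 0 := by
  intro hzero
  have hP0 : P 0 = 0 := by
    rw [eq_C_of_natDegree_eq_zero h0, coeff_zero_eq_eval_zero, hzero, map_zero]
  have hΔ : deltaOmega ω (P (Pi.single j 1)) = 0 := by
    rw [hP, Fintype.sum_eq_single j fun i hi => by simp [hi]]
    simp [Pi.single, hP0]
  have := congrArg natDegree (eq_C_of_deltaOmega_eq_zero hω hΔ)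
  rw [h1, natDegree_C] at this
  exact one_ne_zero this

end IsMultipleDeltaAppell

/-- A multi-indexed polynomial set is multiple `Δ_ω`-Appell, i.e.
`Δ_ω P_n = ∑_j n_j P_{n - e_j}` (a term whose index would be negative is omitted since its
coefficient `n_j` vanishes), iff it has an explicit representation in terms of the generalized
falling factorials with coefficients `a_{n-k}`, `a_0 ≠ 0`. -/
theorem multipleDeltaAppell_iff_representation_multi (r : ℕ) (hr : 1 ≤ r) (ω : ℝ) (hω : ω ≠ 0)
    (P : (Fin r → ℕ) → Polynomial ℝ) (hdeg : ∀ n : Fin r → ℕ, (P n).natDegree = ∑ i, n i) :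
    (∀ n : Fin r → ℕ, deltaOmega ω (P n) =
        ∑ j : Fin r, Polynomial.C ((n j : ℝ)) * P (Function.update n j (n j - 1))) ↔
      ∃ a : (Fin r → ℕ) → ℝ, a 0 ≠ 0 ∧
        ∀ (n : Fin r → ℕ) (x : ℝ),
          (P n).eval x =
            ∑ k ∈ Fintype.piFinset (fun i => Finset.range (n i + 1)),
              (∏ i, ((n i).choose (k i) : ℝ)) * a (fun i => n i - k i) *
                genFallingFactorial ω x (∑ i, k i) := by
  constructor
  · intro (hP : IsMultipleDeltaAppell ω P)
    refine ⟨fun m => (P m).eval 0, hP.eval_zero_zero_ne_zero hω ⟨0, hr⟩ (by simp [hdeg])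
      (by simp [hdeg]), fun n x => ?_⟩
    rw [hP.eq_appellRep hω n, eval_appellRep]
  · rintro ⟨a, -, hrep⟩
    have hPa : P = appellRep ω a :=
      funext fun n => Polynomial.funext fun x => by rw [hrep, eval_appellRep]
    exact hPa ▸ isMultipleDeltaAppell_appellRep hω a
end
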